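/- First Epsilon Theorem (without identity): if E is a formula containing no ε-terms and no quantifiers, and E is provable in the extended epsilon calculus EC_ε∀, then E is provable in the elementary calculus EC (propositional tautologies and modus ponens only, no critical formulas, no quantifiers). -/

import Mathlib

/- Syntax of the epsilon calculus -/
mutual
inductive Tm : Type where
  | var : ℕ → Tm
  | fn : ℕ → List Tm → Tm
  | eps : ℕ → Fm → Tm
inductive Fm : Type where
  | pred : ℕ → List Tm → Fm
  | eq : Tm → Tm → Fm
  | bot : Fm
  | top : Fm
  | not : Fm → Fm
  | and : Fm → Fm → Fm
  | or : Fm → Fm → Fm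
  | imp : Fm → Fm → Fm
  | iff : Fm → Fm → Fm
  | all : ℕ → Fm → Fm
  | ex : ℕ → Fm → Fm
end

/- Free variables -/
mutual
def freeTm : Tm → Finset ℕ
  | .var x => {x}
  | .fn _ ts => freeL ts
  | .eps x A => (freeFm A).erase x
def freeL : List Tm → Finset ℕ
  | [] => ∅
  | t :: ts => freeTm t ∪ freeL ts
def freeFm : Fm → Finset ℕ
  | .pred _ ts => freeL ts
  | .eq t u => freeTm t ∪ freeTm u
  | .bot => ∅
  | .top => ∅
  | .not A => freeFm A
  | .and A B => freeFm A ∪ freeFm B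
  | .or A B => freeFm A ∪ freeFm B
  | .imp A B => freeFm A ∪ freeFm B
  | .iff A B => freeFm A ∪ freeFm B
  | .all x A => (freeFm A).erase x
  | .ex x A => (freeFm A).erase x
end

/- Simultaneous substitution (of terms for free variables) -/
mutual
def ssubTm (σ : ℕ → Tm) : Tm → Tm
  | .var x => σ x
  | .fn f ts => .fn f (ssubL σ ts)
  | .eps x A => .eps x (ssubFm (Function.update σ x (.var x)) A)
def ssubL (σ : ℕ → Tm) : List Tm → List Tm
  | [] => []
  | t :: ts => ssubTm σ t :: ssubL σ ts
def ssubFm (σ : ℕ → Tm) : Fm → Fm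
  | .pred P ts => .pred P (ssubL σ ts)
  | .eq t u => .eq (ssubTm σ t) (ssubTm σ u)
  | .bot => .bot
  | .top => .top
  | .not A => .not (ssubFm σ A)
  | .and A B => .and (ssubFm σ A) (ssubFm σ B)
  | .or A B => .or (ssubFm σ A) (ssubFm σ B)
  | .imp A B => .imp (ssubFm σ A) (ssubFm σ B)
  | .iff A B => .iff (ssubFm σ A) (ssubFm σ B)
  | .all x A => .all x (ssubFm (Function.update σ x (.var x)) A)
  | .ex x A => .ex x (ssubFm (Function.update σ x (.var x)) A)
end

/-- Substitution of a single term `u` for the free variable `x`. -/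
def substTm (t : Tm) (x : ℕ) (u : Tm) : Tm :=
  ssubTm (fun y => if y = x then u else .var y) t
def substFm (A : Fm) (x : ℕ) (u : Tm) : Fm :=
  ssubFm (fun y => if y = x then u else .var y) A

/- Alpha-equivalence (syntactic identity up to renaming of bound variables) -/
mutual
inductive AeqTm : Tm → Tm → Prop where
  | var (x) : AeqTm (.var x) (.var x)
  | fn (f) {ts us} : AeqL ts us → AeqTm (.fn f ts) (.fn f us)
  | eps {x y A B} :
      (∀ z, z ∉ freeFm A → z ∉ freeFm B →
        AeqFm (substFm A x (.var z)) (substFm B y (.var z))) →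
      AeqTm (.eps x A) (.eps y B)
inductive AeqL : List Tm → List Tm → Prop where
  | nil : AeqL [] []
  | cons {t u ts us} : AeqTm t u → AeqL ts us → AeqL (t :: ts) (u :: us)
inductive AeqFm : Fm → Fm → Prop where
  | pred (P) {ts us} : AeqL ts us → AeqFm (.pred P ts) (.pred P us)
  | eq {t t' u u'} : AeqTm t t' → AeqTm u u' → AeqFm (.eq t u) (.eq t' u')
  | bot : AeqFm .bot .bot
  | top : AeqFm .top .top
  | not {A B} : AeqFm A B → AeqFm (.not A) (.not B)
  | and {A A' B B'} : AeqFm A A' → AeqFm B B' → AeqFm (.and A B) (.and A' B')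
  | or {A A' B B'} : AeqFm A A' → AeqFm B B' → AeqFm (.or A B) (.or A' B')
  | imp {A A' B B'} : AeqFm A A' → AeqFm B B' → AeqFm (.imp A B) (.imp A' B')
  | iff {A A' B B'} : AeqFm A A' → AeqFm B B' → AeqFm (.iff A B) (.iff A' B')
  | all {x y A B} :
      (∀ z, z ∉ freeFm A → z ∉ freeFm B →
        AeqFm (substFm A x (.var z)) (substFm B y (.var z))) →
      AeqFm (.all x A) (.all y B)
  | ex {x y A B} :
      (∀ z, z ∉ freeFm A → z ∉ freeFm B →
        AeqFm (substFm A x (.var z)) (substFm B y (.var z))) →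
      AeqFm (.ex x A) (.ex y B)
end

/- Subterms (per the paper: t is a subterm of E iff E ≡ E'(x)[x/t]) -/
def IsSubTm (t u : Tm) : Prop :=
  ∃ (u' : Tm) (x : ℕ), x ∈ freeTm u' ∧ AeqTm u (substTm u' x t)
def IsSubFm (t : Tm) (A : Fm) : Prop :=
  ∃ (A' : Fm) (x : ℕ), x ∈ freeFm A' ∧ AeqFm A (substFm A' x t)
def IsProperSubTm (t u : Tm) : Prop := IsSubTm t u ∧ ¬ AeqTm t u
/-- `t` is an immediate subterm of `u`: a subterm of `u` that is not a
subterm of any proper subterm of `u`. -/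
def ImmSubTm (t u : Tm) : Prop :=
  IsSubTm t u ∧ ∀ v, IsProperSubTm v u → ¬ IsSubTm t v

/- The list of free-variable occurrences of a term, from left to right. -/
mutual
def fvOccsTm : Tm → List ℕ
  | .var x => [x]
  | .fn _ ts => fvOccsL ts
  | .eps x A => (fvOccsFm A).filter (· ≠ x)
def fvOccsL : List Tm → List ℕ
  | [] => []
  | t :: ts => fvOccsTm t ++ fvOccsL ts
def fvOccsFm : Fm → List ℕ
  | .pred _ ts => fvOccsL ts
  | .eq t u => fvOccsTm t ++ fvOccsTm u
  | .bot => []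
  | .top => []
  | .not A => fvOccsFm A
  | .and A B => fvOccsFm A ++ fvOccsFm B
  | .or A B => fvOccsFm A ++ fvOccsFm B
  | .imp A B => fvOccsFm A ++ fvOccsFm B
  | .iff A B => fvOccsFm A ++ fvOccsFm B
  | .all x A => (fvOccsFm A).filter (· ≠ x)
  | .ex x A => (fvOccsFm A).filter (· ≠ x)
end

/- "u is free for x in E" -/
mutual
def ffTm (u : Tm) (x : ℕ) : Tm → Prop
  | .var _ => True
  | .fn _ ts => ffL u x ts
  | .eps y A => x ∉ freeTm (Tm.eps y A) ∨ (y ∉ freeTm u ∧ ffFm u x A)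
def ffL (u : Tm) (x : ℕ) : List Tm → Prop
  | [] => True
  | t :: ts => ffTm u x t ∧ ffL u x ts
def ffFm (u : Tm) (x : ℕ) : Fm → Prop
  | .pred _ ts => ffL u x ts
  | .eq t s => ffTm u x t ∧ ffTm u x s
  | .bot => True
  | .top => True
  | .not A => ffFm u x A
  | .and A B => ffFm u x A ∧ ffFm u x B
  | .or A B => ffFm u x A ∧ ffFm u x B
  | .imp A B => ffFm u x A ∧ ffFm u x B
  | .iff A B => ffFm u x A ∧ ffFm u x B
  | .all y A => x ∉ freeFm (Fm.all y A) ∨ (y ∉ freeTm u ∧ ffFm u x A)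
  | .ex y A => x ∉ freeFm (Fm.ex y A) ∨ (y ∉ freeTm u ∧ ffFm u x A)
end

/- Rank of ε-terms.  `srkTm x t` is the maximum rank of an ε-term
occurring in `t` which contains `x` free (0 if there is none). -/
mutual
def rkTm : Tm → ℕ
  | .var _ => 0
  | .fn _ _ => 0
  | .eps x A => srkFm x A + 1
def srkTm : ℕ → Tm → ℕ
  | _, .var _ => 0
  | x, .fn _ ts => srkL x ts
  | x, .eps y A =>
      max (if x ∈ freeTm (Tm.eps y A) then srkFm y A + 1 else 0) (srkFm x A)
def srkL : ℕ → List Tm → ℕ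
  | _, [] => 0
  | x, t :: ts => max (srkTm x t) (srkL x ts)
def srkFm : ℕ → Fm → ℕ
  | x, .pred _ ts => srkL x ts
  | x, .eq t u => max (srkTm x t) (srkTm x u)
  | _, .bot => 0
  | _, .top => 0
  | x, .not A => srkFm x A
  | x, .and A B => max (srkFm x A) (srkFm x B)
  | x, .or A B => max (srkFm x A) (srkFm x B)
  | x, .imp A B => max (srkFm x A) (srkFm x B)
  | x, .iff A B => max (srkFm x A) (srkFm x B)
  | x, .all _ A => srkFm x A
  | x, .ex _ A => srkFm x A
end

/- ε-free and quantifier-free expressions -/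
mutual
def epsFreeTm : Tm → Prop
  | .var _ => True
  | .fn _ ts => epsFreeL ts
  | .eps _ _ => False
def epsFreeL : List Tm → Prop
  | [] => True
  | t :: ts => epsFreeTm t ∧ epsFreeL ts
def epsFreeFm : Fm → Prop
  | .pred _ ts => epsFreeL ts
  | .eq t u => epsFreeTm t ∧ epsFreeTm u
  | .bot => True
  | .top => True
  | .not A => epsFreeFm A
  | .and A B => epsFreeFm A ∧ epsFreeFm B
  | .or A B => epsFreeFm A ∧ epsFreeFm B
  | .imp A B => epsFreeFm A ∧ epsFreeFm B
  | .iff A B => epsFreeFm A ∧ epsFreeFm B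
  | .all _ A => epsFreeFm A
  | .ex _ A => epsFreeFm A
end
mutual
def qFreeTm : Tm → Prop
  | .var _ => True
  | .fn _ ts => qFreeL ts
  | .eps _ A => qFreeFm A
def qFreeL : List Tm → Prop
  | [] => True
  | t :: ts => qFreeTm t ∧ qFreeL ts
def qFreeFm : Fm → Prop
  | .pred _ ts => qFreeL ts
  | .eq t u => qFreeTm t ∧ qFreeTm u
  | .bot => True
  | .top => True
  | .not A => qFreeFm A
  | .and A B => qFreeFm A ∧ qFreeFm B
  | .or A B => qFreeFm A ∧ qFreeFm B
  | .imp A B => qFreeFm A ∧ qFreeFm B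
  | .iff A B => qFreeFm A ∧ qFreeFm B
  | .all _ _ => False
  | .ex _ _ => False
end

/- Propositional tautologies: true under every assignment of truth values
to formulas, where the connectives and constants are interpreted as usual
and all other formulas are treated as atoms. -/
def evalP (v : Fm → Prop) : Fm → Prop
  | .bot => False
  | .top => True
  | .not A => ¬ evalP v A
  | .and A B => evalP v A ∧ evalP v B
  | .or A B => evalP v A ∨ evalP v B
  | .imp A B => evalP v A → evalP v B
  | .iff A B => evalP v A ↔ evalP v B
  | A => v A
def Taut (A : Fm) : Prop := ∀ v : Fm → Prop, evalP v A

/- Calculi: flags for identity axioms, critical formulas, extensionality,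
and quantifiers. -/
structure Calc where
  eqAx : Bool
  crit : Bool
  ext : Bool
  quant : Bool

def EC : Calc := ⟨false, false, false, false⟩          -- elementary calculus (no identity)
def ECeq : Calc := ⟨true, false, false, false⟩          -- elementary calculus with identity
def ECe : Calc := ⟨true, true, false, false⟩            -- epsilon calculus
def ECeNoEq : Calc := ⟨false, true, false, false⟩       -- epsilon calculus without identity
def ECeExt : Calc := ⟨true, true, true, false⟩          -- extensional epsilon calculus
def ECeQ : Calc := ⟨true, true, false, true⟩            -- extended epsilon calculus
def ECeQNoEq : Calc := ⟨false, true, false, true⟩       -- extended epsilon calculus without identity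

/-- The extensionality axiom (ext), i.e. the ε-translation of
∀x(A(x) ↔ B(x)) → εx.A(x) = εx.B(x). -/
def extAx (x : ℕ) (A B : Fm) : Fm :=
  let e := Tm.eps x (.not (.iff A B))
  .imp (.iff (substFm A x e) (substFm B x e)) (.eq (.eps x A) (.eps x B))

def IsAxiom (S : Calc) (F : Fm) : Prop :=
  Taut F ∨
  (S.eqAx = true ∧ ((∃ t, F = .eq t t) ∨
    (∃ t u A x, ffFm t x A ∧ ffFm u x A ∧
      F = .imp (.eq t u) (.iff (substFm A x t) (substFm A x u))))) ∨
  (S.crit = true ∧ ∃ A x t, ffFm t x A ∧ ffFm (Tm.eps x A) x A ∧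
      F = .imp (substFm A x t) (substFm A x (.eps x A))) ∨
  (S.ext = true ∧ ∃ A B x, F = extAx x A B) ∨
  (S.quant = true ∧ ∃ A x t, ffFm t x A ∧
      (F = .imp (substFm A x t) (.ex x A) ∨ F = .imp (.all x A) (substFm A x t)))

/-- The eigenvariable condition: `x` does not occur free in line `i`
or in any line below it. -/
def Eigen (x : ℕ) (L : List Fm) (i : ℕ) : Prop :=
  ∀ k (hk : k < L.length), i ≤ k → x ∉ freeFm (L.get ⟨k, hk⟩)

/-- Line `i` of `L` is justified: it is in Γ, an axiom, or follows from
earlier lines by modus ponens or (if permitted) the quantifier rules R∃, R∀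
(with the eigenvariable condition). -/
def Justified (S : Calc) (Γ : Set Fm) (L : List Fm) (i : ℕ) (hi : i < L.length) : Prop :=
  L.get ⟨i, hi⟩ ∈ Γ ∨ IsAxiom S (L.get ⟨i, hi⟩) ∨
  (∃ j, ∃ k, ∃ hj : j < L.length, ∃ hk : k < L.length, j < i ∧ k < i ∧
    L.get ⟨k, hk⟩ = .imp (L.get ⟨j, hj⟩) (L.get ⟨i, hi⟩)) ∨
  (S.quant = true ∧ ∃ j, ∃ hj : j < L.length, j < i ∧ ∃ x B C,
    ((L.get ⟨j, hj⟩ = .imp B C ∧ L.get ⟨i, hi⟩ = .imp (.ex x B) C) ∨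
     (L.get ⟨j, hj⟩ = .imp C B ∧ L.get ⟨i, hi⟩ = .imp C (.all x B))) ∧
    Eigen x L i)

/-- `L` is a proof from the set of hypotheses `Γ` in the calculus `S`. -/
def IsProofFrom (S : Calc) (Γ : Set Fm) (L : List Fm) : Prop :=
  ∀ i (hi : i < L.length), Justified S Γ L i hi

/-- `L` is a proof of `A` from `Γ` in `S`. -/
def ProvesL (S : Calc) (Γ : Set Fm) (L : List Fm) (A : Fm) : Prop :=
  IsProofFrom S Γ L ∧ L.getLast? = some A

def Provable (S : Calc) (Γ : Set Fm) (A : Fm) : Prop := ∃ L, ProvesL S Γ L A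

/-- `x` occurs as the variable of an application of R∃ or R∀ in `L`. -/
def IsEigenVar (x : ℕ) (L : List Fm) : Prop :=
  ∃ i, ∃ hi : i < L.length, ∃ j, ∃ hj : j < L.length, j < i ∧ ∃ B C,
    ((L.get ⟨j, hj⟩ = .imp B C ∧ L.get ⟨i, hi⟩ = .imp (.ex x B) C) ∨
     (L.get ⟨j, hj⟩ = .imp C B ∧ L.get ⟨i, hi⟩ = .imp C (.all x B)))

/- Substitution instances -/
inductive InstOf : Fm → Fm → Prop where
  | refl (A) : InstOf A A
  | step {B A} (x : ℕ) (t : Tm) : InstOf B A → InstOf (substFm B x t) A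

/-- The set of substitution instances of members of `Γ`. -/
def Inst (Γ : Set Fm) : Set Fm := {B | ∃ A ∈ Γ, InstOf B A}

/-- A sentence is a closed formula. -/
def Sentence (A : Fm) : Prop := freeFm A = ∅

/- Critical ε-terms of a proof, rank of a proof, the r-order of a proof -/
def CritFor (e : Tm) (F : Fm) : Prop :=
  ∃ A x t, e = Tm.eps x A ∧ F = .imp (substFm A x t) (substFm A x (.eps x A))
def IsCriticalIn (e : Tm) (L : List Fm) : Prop := ∃ F ∈ L, CritFor e F
/-- The rank of a proof: the maximal rank of its critical ε-terms. -/
noncomputable def prfRank (L : List Fm) : ℕ :=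
  sSup {r | ∃ e, IsCriticalIn e L ∧ rkTm e = r}
/-- The collection of alpha-equivalence classes of critical ε-terms of
rank `r` in `L`; its cardinality is the `r`-order o(L, r). -/
def critClasses (L : List Fm) (r : ℕ) : Set (Set Tm) :=
  {s | ∃ e, IsCriticalIn e L ∧ rkTm e = r ∧ s = {e' | AeqTm e e'}}

/- Semantics -/
structure StrucOn (D : Type) where
  dne : Nonempty D
  fns : ℕ → List D → D
  preds : ℕ → List D → Prop

/-- An extensional choice function on the domain `D`. -/
def IsChoice {D : Type} (Φ : Set D → D) : Prop :=
  ∀ X : Set D, X.Nonempty → Φ X ∈ X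

mutual
def val {D : Type} (M : StrucOn D) (Φ : Set D → D) (s : ℕ → D) : Tm → D
  | .var x => s x
  | .fn f ts => M.fns f (valL M Φ s ts)
  | .eps x A => Φ {m | sat M Φ (Function.update s x m) A}
def valL {D : Type} (M : StrucOn D) (Φ : Set D → D) (s : ℕ → D) : List Tm → List D
  | [] => []
  | t :: ts => val M Φ s t :: valL M Φ s ts
def sat {D : Type} (M : StrucOn D) (Φ : Set D → D) (s : ℕ → D) : Fm → Prop
  | .pred P ts => M.preds P (valL M Φ s ts)
  | .eq t u => val M Φ s t = val M Φ s u
  | .bot => False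
  | .top => True
  | .not A => ¬ sat M Φ s A
  | .and A B => sat M Φ s A ∧ sat M Φ s B
  | .or A B => sat M Φ s A ∨ sat M Φ s B
  | .imp A B => sat M Φ s A → sat M Φ s B
  | .iff A B => sat M Φ s A ↔ sat M Φ s B
  | .all x A => ∀ m, sat M Φ (Function.update s x m) A
  | .ex x A => ∃ m, sat M Φ (Function.update s x m) A
end

/- The ε-translation -/
mutual
def epsTm : Tm → Tm
  | .var x => .var x
  | .fn f ts => .fn f (epsL ts)
  | .eps x A => .eps x (epsFm A)
def epsL : List Tm → List Tm
  | [] => []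
  | t :: ts => epsTm t :: epsL ts
def epsFm : Fm → Fm
  | .pred P ts => .pred P (epsL ts)
  | .eq t u => .eq (epsTm t) (epsTm u)
  | .bot => .bot
  | .top => .top
  | .not A => .not (epsFm A)
  | .and A B => .and (epsFm A) (epsFm B)
  | .or A B => .or (epsFm A) (epsFm B)
  | .imp A B => .imp (epsFm A) (epsFm B)
  | .iff A B => .iff (epsFm A) (epsFm B)
  | .ex x A => substFm (epsFm A) x (.eps x (epsFm A))
  | .all x A => substFm (epsFm A) x (.eps x (.not (epsFm A)))
end

/- Replacement of every occurrence of the term `e` by `u` -/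
open Classical in
mutual
noncomputable def replTm (e u : Tm) : Tm → Tm
  | .var x => if Tm.var x = e then u else .var x
  | .fn f ts => if Tm.fn f ts = e then u else .fn f (replL e u ts)
  | .eps x A => if Tm.eps x A = e then u else .eps x (replFm e u A)
noncomputable def replL (e u : Tm) : List Tm → List Tm
  | [] => []
  | t :: ts => replTm e u t :: replL e u ts
noncomputable def replFm (e u : Tm) : Fm → Fm
  | .pred P ts => .pred P (replL e u ts)
  | .eq t s => .eq (replTm e u t) (replTm e u s)
  | .bot => .bot
  | .top => .top
  | .not A => .not (replFm e u A)
  | .and A B => .and (replFm e u A) (replFm e u B)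
  | .or A B => .or (replFm e u A) (replFm e u B)
  | .imp A B => .imp (replFm e u A) (replFm e u B)
  | .iff A B => .iff (replFm e u A) (replFm e u B)
  | .all x A => .all x (replFm e u A)
  | .ex x A => .ex x (replFm e u A)
end

/-- Disjunction of a list of formulas. -/
def disj : List Fm → Fm
  | [] => .bot
  | [A] => A
  | A :: B :: rest => .or A (disj (B :: rest))

/- Term model ingredients -/
/-- The equivalence class of `t` under Γ-provable identity. -/
def cls (Γ : Set Fm) (t : Tm) : Set Tm := {u | Fm.eq t u ∈ Γ}
/-- `T` (a set of equivalence classes) is represented by the formula `A`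
with free variable `x`: T = { t̃ : A(t) ∈ Γ }. -/
def RepBy (Γ : Set Fm) (T : Set (Set Tm)) (A : Fm) (x : ℕ) : Prop :=
  T = {S | ∃ t, substFm A x t ∈ Γ ∧ S = cls Γ t}
/-- The domain of the term model: equivalence classes of terms. -/
def ClassD (Γ : Set Fm) : Type := {S : Set Tm // ∃ t, S = cls Γ t}
def mkCls (Γ : Set Fm) (t : Tm) : ClassD Γ := ⟨cls Γ t, t, rfl⟩

/-- `p` (an ε-term with free variables `xs`) is a type of the ε-term `e`:
(1) `e` is obtained from `p` by substituting terms for the `xs`;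
(2) the free variables of `p` are exactly the `xs`;
(3) each of the `xs` is an immediate subterm of `p`;
(4,5) each of the `xs` occurs exactly once in `p`, in the order listed. -/
def IsTypeOf (p : Tm) (xs : List ℕ) (e : Tm) : Prop :=
  (∃ x B, p = Tm.eps x B) ∧
  (∃ σ : ℕ → Tm, (∀ y, y ∉ xs → σ y = .var y) ∧ AeqTm e (ssubTm σ p)) ∧
  freeTm p = xs.toFinset ∧
  (∀ xi ∈ xs, ImmSubTm (.var xi) p) ∧
  fvOccsTm p = xs

namespace FET

/- Semantics with uninterpreted equality -/
mutual
def valE {D : Type} (M : StrucOn D) (R : D → D → Prop) (Φ : Set D → D) (s : ℕ → D) : Tm → D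
  | .var x => s x
  | .fn f ts => M.fns f (valLE M R Φ s ts)
  | .eps x A => Φ {m | satE M R Φ (Function.update s x m) A}
def valLE {D : Type} (M : StrucOn D) (R : D → D → Prop) (Φ : Set D → D) (s : ℕ → D) : List Tm → List D
  | [] => []
  | t :: ts => valE M R Φ s t :: valLE M R Φ s ts
def satE {D : Type} (M : StrucOn D) (R : D → D → Prop) (Φ : Set D → D) (s : ℕ → D) : Fm → Prop
  | .pred P ts => M.preds P (valLE M R Φ s ts)
  | .eq t u => R (valE M R Φ s t) (valE M R Φ s u)
  | .bot => False
  | .top => True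
  | .not A => ¬ satE M R Φ s A
  | .and A B => satE M R Φ s A ∧ satE M R Φ s B
  | .or A B => satE M R Φ s A ∨ satE M R Φ s B
  | .imp A B => satE M R Φ s A → satE M R Φ s B
  | .iff A B => satE M R Φ s A ↔ satE M R Φ s B
  | .all x A => ∀ m, satE M R Φ (Function.update s x m) A
  | .ex x A => ∃ m, satE M R Φ (Function.update s x m) A
end

end FET
namespace FET

mutual
theorem ssubTm_congr {σ τ : ℕ → Tm} : ∀ t : Tm, (∀ y ∈ freeTm t, σ y = τ y) → ssubTm σ t = ssubTm τ t
  | .var x, h => by simpa [ssubTm] using h x (by simp [freeTm])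
  | .fn f ts, h => by
      simp only [ssubTm]
      exact congrArg _ (ssubL_congr ts (by simpa [freeTm] using h))
  | .eps x A, h => by
      simp only [ssubTm]
      refine congrArg _ (ssubFm_congr A ?_)
      intro y hy
      by_cases hxy : y = x
      · subst hxy; simp
      · simp only [Function.update_of_ne hxy]
        exact h y (by simp [freeTm, Finset.mem_erase, hxy, hy])
theorem ssubL_congr {σ τ : ℕ → Tm} : ∀ ts : List Tm, (∀ y ∈ freeL ts, σ y = τ y) → ssubL σ ts = ssubL τ ts
  | [], _ => rfl
  | t :: ts, h => by
      simp only [ssubL]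
      refine congrArg₂ _ (ssubTm_congr t ?_) (ssubL_congr ts ?_) <;>
        intro y hy <;> exact h y (by simp [freeL, hy])
theorem ssubFm_congr {σ τ : ℕ → Tm} : ∀ A : Fm, (∀ y ∈ freeFm A, σ y = τ y) → ssubFm σ A = ssubFm τ A
  | .pred P ts, h => by
      simp only [ssubFm]
      exact congrArg _ (ssubL_congr ts (by simpa [freeFm] using h))
  | .eq t u, h => by
      simp only [ssubFm]
      refine congrArg₂ _ (ssubTm_congr t ?_) (ssubTm_congr u ?_) <;>
        intro y hy <;> exact h y (by simp [freeFm, hy])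
  | .bot, _ => rfl
  | .top, _ => rfl
  | .not A, h => by
      simp only [ssubFm]
      exact congrArg _ (ssubFm_congr A (by simpa [freeFm] using h))
  | .and A B, h => by
      simp only [ssubFm]
      refine congrArg₂ _ (ssubFm_congr A ?_) (ssubFm_congr B ?_) <;>
        intro y hy <;> exact h y (by simp [freeFm, hy])
  | .or A B, h => by
      simp only [ssubFm]
      refine congrArg₂ _ (ssubFm_congr A ?_) (ssubFm_congr B ?_) <;>
        intro y hy <;> exact h y (by simp [freeFm, hy])
  | .imp A B, h => by
      simp only [ssubFm]
      refine congrArg₂ _ (ssubFm_congr A ?_) (ssubFm_congr B ?_) <;>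
        intro y hy <;> exact h y (by simp [freeFm, hy])
  | .iff A B, h => by
      simp only [ssubFm]
      refine congrArg₂ _ (ssubFm_congr A ?_) (ssubFm_congr B ?_) <;>
        intro y hy <;> exact h y (by simp [freeFm, hy])
  | .all x A, h => by
      simp only [ssubFm]
      refine congrArg _ (ssubFm_congr A ?_)
      intro y hy
      by_cases hxy : y = x
      · subst hxy; simp
      · simp only [Function.update_of_ne hxy]
        exact h y (by simp [freeFm, Finset.mem_erase, hxy, hy])
  | .ex x A, h => by
      simp only [ssubFm]
      refine congrArg _ (ssubFm_congr A ?_)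
      intro y hy
      by_cases hxy : y = x
      · subst hxy; simp
      · simp only [Function.update_of_ne hxy]
        exact h y (by simp [freeFm, Finset.mem_erase, hxy, hy])
end

mutual
theorem ssubTm_id : ∀ t : Tm, ssubTm (fun y => .var y) t = t
  | .var x => rfl
  | .fn f ts => by simp only [ssubTm]; exact congrArg _ (ssubL_id ts)
  | .eps x A => by
      simp only [ssubTm]
      refine congrArg _ ?_
      rw [ssubFm_congr A (τ := fun y => .var y) (fun y _ => by
        by_cases hxy : y = x
        · subst hxy; simp
        · simp [Function.update_of_ne hxy])]
      exact ssubFm_id A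
theorem ssubL_id : ∀ ts : List Tm, ssubL (fun y => .var y) ts = ts
  | [] => rfl
  | t :: ts => by simp only [ssubL]; exact congrArg₂ _ (ssubTm_id t) (ssubL_id ts)
theorem ssubFm_id : ∀ A : Fm, ssubFm (fun y => .var y) A = A
  | .pred P ts => by simp only [ssubFm]; exact congrArg _ (ssubL_id ts)
  | .eq t u => by simp only [ssubFm]; exact congrArg₂ _ (ssubTm_id t) (ssubTm_id u)
  | .bot => rfl
  | .top => rfl
  | .not A => by simp only [ssubFm]; exact congrArg _ (ssubFm_id A)
  | .and A B => by simp only [ssubFm]; exact congrArg₂ _ (ssubFm_id A) (ssubFm_id B)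
  | .or A B => by simp only [ssubFm]; exact congrArg₂ _ (ssubFm_id A) (ssubFm_id B)
  | .imp A B => by simp only [ssubFm]; exact congrArg₂ _ (ssubFm_id A) (ssubFm_id B)
  | .iff A B => by simp only [ssubFm]; exact congrArg₂ _ (ssubFm_id A) (ssubFm_id B)
  | .all x A => by
      simp only [ssubFm]
      refine congrArg _ ?_
      rw [ssubFm_congr A (τ := fun y => .var y) (fun y _ => by
        by_cases hxy : y = x
        · subst hxy; simp
        · simp [Function.update_of_ne hxy])]
      exact ssubFm_id A
  | .ex x A => by
      simp only [ssubFm]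
      refine congrArg _ ?_
      rw [ssubFm_congr A (τ := fun y => .var y) (fun y _ => by
        by_cases hxy : y = x
        · subst hxy; simp
        · simp [Function.update_of_ne hxy])]
      exact ssubFm_id A
end

theorem substTm_not_free {t : Tm} {x : ℕ} {u : Tm} (h : x ∉ freeTm t) : substTm t x u = t := by
  unfold substTm
  rw [ssubTm_congr t (τ := fun y => .var y) (fun y hy => by
    have : y ≠ x := fun e => h (e ▸ hy)
    simp [this])]
  exact ssubTm_id t

theorem substFm_not_free {A : Fm} {x : ℕ} {u : Tm} (h : x ∉ freeFm A) : substFm A x u = A := by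
  unfold substFm
  rw [ssubFm_congr A (τ := fun y => .var y) (fun y hy => by
    have : y ≠ x := fun e => h (e ▸ hy)
    simp [this])]
  exact ssubFm_id A

end FET
namespace FET

variable {D : Type} (M : StrucOn D) (R : D → D → Prop) (Φ : Set D → D)

mutual
theorem valE_coin {s s' : ℕ → D} : ∀ t : Tm, (∀ y ∈ freeTm t, s y = s' y) →
    valE M R Φ s t = valE M R Φ s' t
  | .var x, h => h x (by simp [freeTm])
  | .fn f ts, h => by
      simp only [valE]; exact congrArg _ (valLE_coin ts (by simpa [freeTm] using h))
  | .eps x A, h => by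
      simp only [valE]
      refine congrArg _ (Set.ext fun m => ?_)
      refine satE_coin A (fun y hy => ?_)
      by_cases hxy : y = x
      · subst hxy; simp
      · simp only [Function.update_of_ne hxy]
        exact h y (by simp [freeTm, Finset.mem_erase, hxy, hy])
theorem valLE_coin {s s' : ℕ → D} : ∀ ts : List Tm, (∀ y ∈ freeL ts, s y = s' y) →
    valLE M R Φ s ts = valLE M R Φ s' ts
  | [], _ => rfl
  | t :: ts, h => by
      simp only [valLE]
      exact congrArg₂ _ (valE_coin t (fun y hy => h y (by simp [freeL, hy])))
        (valLE_coin ts (fun y hy => h y (by simp [freeL, hy])))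
theorem satE_coin {s s' : ℕ → D} : ∀ A : Fm, (∀ y ∈ freeFm A, s y = s' y) →
    (satE M R Φ s A ↔ satE M R Φ s' A)
  | .pred P ts, h => by
      simp only [satE]; rw [valLE_coin ts (by simpa [freeFm] using h)]
  | .eq t u, h => by
      simp only [satE]
      rw [valE_coin t (fun y hy => h y (by simp [freeFm, hy])),
        valE_coin u (fun y hy => h y (by simp [freeFm, hy]))]
  | .bot, _ => Iff.rfl
  | .top, _ => Iff.rfl
  | .not A, h => by
      simp only [satE]; rw [satE_coin A (by simpa [freeFm] using h)]
  | .and A B, h => by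
      simp only [satE]
      rw [satE_coin A (fun y hy => h y (by simp [freeFm, hy])),
        satE_coin B (fun y hy => h y (by simp [freeFm, hy]))]
  | .or A B, h => by
      simp only [satE]
      rw [satE_coin A (fun y hy => h y (by simp [freeFm, hy])),
        satE_coin B (fun y hy => h y (by simp [freeFm, hy]))]
  | .imp A B, h => by
      simp only [satE]
      rw [satE_coin A (fun y hy => h y (by simp [freeFm, hy])),
        satE_coin B (fun y hy => h y (by simp [freeFm, hy]))]
  | .iff A B, h => by
      simp only [satE]
      rw [satE_coin A (fun y hy => h y (by simp [freeFm, hy])),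
        satE_coin B (fun y hy => h y (by simp [freeFm, hy]))]
  | .all x A, h => by
      simp only [satE]
      refine forall_congr' fun m => satE_coin A (fun y hy => ?_)
      by_cases hxy : y = x
      · subst hxy; simp
      · simp only [Function.update_of_ne hxy]
        exact h y (by simp [freeFm, Finset.mem_erase, hxy, hy])
  | .ex x A, h => by
      simp only [satE]
      refine exists_congr fun m => satE_coin A (fun y hy => ?_)
      by_cases hxy : y = x
      · subst hxy; simp
      · simp only [Function.update_of_ne hxy]
        exact h y (by simp [freeFm, Finset.mem_erase, hxy, hy])
end

end FET
namespace FET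

theorem update_sub_eq {x z : ℕ} {u : Tm} (hzx : z ≠ x) :
    Function.update (fun y => if y = x then u else Tm.var y) z (.var z)
      = (fun y => if y = x then u else Tm.var y) := by
  funext w
  by_cases hwz : w = z
  · subst hwz; simp [Function.update_self, hzx]
  · simp [Function.update_of_ne hwz]

theorem update_sub_id {x : ℕ} {u : Tm} :
    Function.update (fun y => if y = x then u else Tm.var y) x (.var x)
      = (fun y => Tm.var y) := by
  funext w
  by_cases hwx : w = x
  · subst hwx; simp
  · simp [Function.update_of_ne hwx, hwx]

mutual
theorem valE_sub {D : Type} (M : StrucOn D) (R : D → D → Prop) (Φ : Set D → D) (s : ℕ → D) (u : Tm) (x : ℕ) : ∀ t : Tm, ffTm u x t →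
    valE M R Φ s (substTm t x u) = valE M R Φ (Function.update s x (valE M R Φ s u)) t
  | .var z, _ => by
      by_cases hzx : z = x
      · subst hzx; simp [substTm, ssubTm, valE, Function.update_self]
      · simp [substTm, ssubTm, hzx, valE, Function.update_of_ne hzx]
  | .fn f ts, h => by
      simp only [substTm, ssubTm, valE]
      exact congrArg _ (valLE_sub M R Φ s u x ts (by simpa [ffTm, ffL] using h))
  | .eps z A, h => by
      by_cases hx : x ∈ freeTm (Tm.eps z A)
      · obtain ⟨hzu, hA⟩ : z ∉ freeTm u ∧ ffFm u x A := by
          rcases h with h | h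
          · exact absurd hx h
          · exact h
        have hxz : x ≠ z := by
          intro e; subst e
          simp [freeTm] at hx
        show valE M R Φ s (ssubTm _ (Tm.eps z A)) = _
        rw [show ssubTm (fun y => if y = x then u else Tm.var y) (Tm.eps z A)
            = Tm.eps z (substFm A x u) by
          simp only [ssubTm]
          rw [update_sub_eq (Ne.symm hxz)]; rfl]
        simp only [valE]
        refine congrArg _ (Set.ext fun m => ?_)
        simp only [Set.mem_setOf_eq]
        have step := satE_sub M R Φ (Function.update s z m) u x A hA
        rw [step]
        have hval : valE M R Φ (Function.update s z m) u = valE M R Φ s u :=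
          valE_coin M R Φ u (fun y hy => Function.update_of_ne (fun e => hzu (by rw [← e]; exact hy)) _ _)
        rw [hval, Function.update_comm hxz.symm]
      · rw [substTm_not_free hx]
        refine valE_coin M R Φ (Tm.eps z A) (fun y hy => ?_)
        have hyx : y ≠ x := fun e => hx (by rw [← e]; exact hy)
        exact (Function.update_of_ne hyx _ _).symm
theorem valLE_sub {D : Type} (M : StrucOn D) (R : D → D → Prop) (Φ : Set D → D) (s : ℕ → D) (u : Tm) (x : ℕ) : ∀ ts : List Tm, ffL u x ts →
    valLE M R Φ s (ssubL (fun y => if y = x then u else Tm.var y) ts)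
      = valLE M R Φ (Function.update s x (valE M R Φ s u)) ts
  | [], _ => rfl
  | t :: ts, h => by
      simp only [ssubL, valLE]
      exact congrArg₂ _ (valE_sub M R Φ s u x t h.1) (valLE_sub M R Φ s u x ts h.2)
theorem satE_sub {D : Type} (M : StrucOn D) (R : D → D → Prop) (Φ : Set D → D) (s : ℕ → D) (u : Tm) (x : ℕ) : ∀ A : Fm, ffFm u x A →
    (satE M R Φ s (substFm A x u) ↔ satE M R Φ (Function.update s x (valE M R Φ s u)) A)
  | .pred P ts, h => by
      simp only [substFm, ssubFm, satE]
      rw [valLE_sub M R Φ s u x ts (by simpa [ffFm] using h)]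
  | .eq t t', h => by
      simp only [substFm, ssubFm, satE]
      rw [show ssubTm (fun y => if y = x then u else Tm.var y) t = substTm t x u from rfl,
        show ssubTm (fun y => if y = x then u else Tm.var y) t' = substTm t' x u from rfl,
        valE_sub M R Φ s u x t h.1, valE_sub M R Φ s u x t' h.2]
  | .bot, _ => Iff.rfl
  | .top, _ => Iff.rfl
  | .not A, h => by
      simp only [substFm, ssubFm, satE]
      rw [show ssubFm (fun y => if y = x then u else Tm.var y) A = substFm A x u from rfl,
        satE_sub M R Φ s u x A h]
  | .and A B, h => by
      simp only [substFm, ssubFm, satE]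
      rw [show ssubFm (fun y => if y = x then u else Tm.var y) A = substFm A x u from rfl,
        show ssubFm (fun y => if y = x then u else Tm.var y) B = substFm B x u from rfl,
        satE_sub M R Φ s u x A h.1, satE_sub M R Φ s u x B h.2]
  | .or A B, h => by
      simp only [substFm, ssubFm, satE]
      rw [show ssubFm (fun y => if y = x then u else Tm.var y) A = substFm A x u from rfl,
        show ssubFm (fun y => if y = x then u else Tm.var y) B = substFm B x u from rfl,
        satE_sub M R Φ s u x A h.1, satE_sub M R Φ s u x B h.2]
  | .imp A B, h => by
      simp only [substFm, ssubFm, satE]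
      rw [show ssubFm (fun y => if y = x then u else Tm.var y) A = substFm A x u from rfl,
        show ssubFm (fun y => if y = x then u else Tm.var y) B = substFm B x u from rfl,
        satE_sub M R Φ s u x A h.1, satE_sub M R Φ s u x B h.2]
  | .iff A B, h => by
      simp only [substFm, ssubFm, satE]
      rw [show ssubFm (fun y => if y = x then u else Tm.var y) A = substFm A x u from rfl,
        show ssubFm (fun y => if y = x then u else Tm.var y) B = substFm B x u from rfl,
        satE_sub M R Φ s u x A h.1, satE_sub M R Φ s u x B h.2]
  | .all z A, h => by
      by_cases hx : x ∈ freeFm (Fm.all z A)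
      · obtain ⟨hzu, hA⟩ : z ∉ freeTm u ∧ ffFm u x A := by
          rcases h with h | h
          · exact absurd hx h
          · exact h
        have hxz : x ≠ z := by
          intro e; subst e
          simp [freeFm] at hx
        show satE M R Φ s (ssubFm _ (Fm.all z A)) ↔ _
        rw [show ssubFm (fun y => if y = x then u else Tm.var y) (Fm.all z A)
            = Fm.all z (substFm A x u) by
          simp only [ssubFm]
          rw [update_sub_eq (Ne.symm hxz)]; rfl]
        simp only [satE]
        refine forall_congr' fun m => ?_
        rw [satE_sub M R Φ (Function.update s z m) u x A hA]
        have hval : valE M R Φ (Function.update s z m) u = valE M R Φ s u :=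
          valE_coin M R Φ u (fun y hy => Function.update_of_ne (fun e => hzu (by rw [← e]; exact hy)) _ _)
        rw [hval, Function.update_comm hxz.symm]
      · rw [substFm_not_free hx]
        refine satE_coin M R Φ (Fm.all z A) (fun y hy => ?_)
        have hyx : y ≠ x := fun e => hx (by rw [← e]; exact hy)
        exact (Function.update_of_ne hyx _ _).symm
  | .ex z A, h => by
      by_cases hx : x ∈ freeFm (Fm.ex z A)
      · obtain ⟨hzu, hA⟩ : z ∉ freeTm u ∧ ffFm u x A := by
          rcases h with h | h
          · exact absurd hx h
          · exact h
        have hxz : x ≠ z := by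
          intro e; subst e
          simp [freeFm] at hx
        show satE M R Φ s (ssubFm _ (Fm.ex z A)) ↔ _
        rw [show ssubFm (fun y => if y = x then u else Tm.var y) (Fm.ex z A)
            = Fm.ex z (substFm A x u) by
          simp only [ssubFm]
          rw [update_sub_eq (Ne.symm hxz)]; rfl]
        simp only [satE]
        refine exists_congr fun m => ?_
        rw [satE_sub M R Φ (Function.update s z m) u x A hA]
        have hval : valE M R Φ (Function.update s z m) u = valE M R Φ s u :=
          valE_coin M R Φ u (fun y hy => Function.update_of_ne (fun e => hzu (by rw [← e]; exact hy)) _ _)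
        rw [hval, Function.update_comm hxz.symm]
      · rw [substFm_not_free hx]
        refine satE_coin M R Φ (Fm.ex z A) (fun y hy => ?_)
        have hyx : y ≠ x := fun e => hx (by rw [← e]; exact hy)
        exact (Function.update_of_ne hyx _ _).symm
end

end FET
namespace FET

def ValidE (A : Fm) : Prop :=
  ∀ (D : Type) (M : StrucOn D) (R : D → D → Prop) (Φ : Set D → D),
    IsChoice Φ → ∀ s : ℕ → D, satE M R Φ s A

theorem evalP_satE {D : Type} (M : StrucOn D) (R : D → D → Prop) (Φ : Set D → D) (s : ℕ → D) :
    ∀ A : Fm, evalP (satE M R Φ s) A ↔ satE M R Φ s A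
  | .pred P ts => by simp [evalP]
  | .eq t u => by simp [evalP]
  | .bot => by simp [evalP, satE]
  | .top => by simp [evalP, satE]
  | .not A => by
      simp only [evalP, satE]
      rw [evalP_satE M R Φ s A]
  | .and A B => by
      simp only [evalP, satE]
      rw [evalP_satE M R Φ s A, evalP_satE M R Φ s B]
  | .or A B => by
      simp only [evalP, satE]
      rw [evalP_satE M R Φ s A, evalP_satE M R Φ s B]
  | .imp A B => by
      simp only [evalP, satE]
      rw [evalP_satE M R Φ s A, evalP_satE M R Φ s B]
  | .iff A B => by
      simp only [evalP, satE]
      rw [evalP_satE M R Φ s A, evalP_satE M R Φ s B]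
  | .all x A => by simp [evalP]
  | .ex x A => by simp [evalP]

theorem axiom_valid {A : Fm} (h : IsAxiom ECeQNoEq A) : ValidE A := by
  rcases h with ht | ⟨hflag, _⟩ | ⟨_, B, x, t, hft, hfe, rfl⟩ | ⟨hflag, _⟩ | ⟨_, B, x, t, hft, hcase⟩
  · intro D M R Φ hΦ s
    exact (evalP_satE M R Φ s A).mp (ht _)
  · simp [ECeQNoEq] at hflag
  · -- critical formula
    intro D M R Φ hΦ s
    simp only [satE]
    intro hsat
    have h1 : satE M R Φ (Function.update s x (valE M R Φ s t)) B :=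
      (satE_sub M R Φ s t x B hft).mp hsat
    refine (satE_sub M R Φ s (Tm.eps x B) x B hfe).mpr ?_
    have hval : valE M R Φ s (Tm.eps x B) = Φ {m | satE M R Φ (Function.update s x m) B} := by
      simp [valE]
    rw [hval]
    have hmem : valE M R Φ s t ∈ {m | satE M R Φ (Function.update s x m) B} := h1
    exact hΦ _ ⟨_, hmem⟩
  · simp [ECeQNoEq] at hflag
  · -- quantifier axioms
    rcases hcase with rfl | rfl
    · intro D M R Φ hΦ s
      simp only [satE]
      intro hsat
      exact ⟨valE M R Φ s t, (satE_sub M R Φ s t x B hft).mp hsat⟩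
    · intro D M R Φ hΦ s
      simp only [satE]
      intro hsat
      exact (satE_sub M R Φ s t x B hft).mpr (hsat _)

theorem proof_valid (L : List Fm) (hL : IsProofFrom ECeQNoEq ∅ L) :
    ∀ i (hi : i < L.length), ValidE (L.get ⟨i, hi⟩) := by
  intro i
  induction i using Nat.strong_induction_on with
  | _ i IH =>
    intro hi
    rcases hL i hi with hΓ | hax | ⟨j, k, hj, hk, hji, hki, heq⟩ |
      ⟨_, j, hj, hji, x, B, C, hcase, heig⟩
    · exact absurd hΓ (Set.notMem_empty _)
    · exact axiom_valid hax
    · intro D M R Φ hΦ s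
      have h1 := IH j hji hj D M R Φ hΦ s
      have h2 := IH k hki hk D M R Φ hΦ s
      rw [heq] at h2
      exact h2 h1
    · have hxi : x ∉ freeFm (L.get ⟨i, hi⟩) := heig i hi le_rfl
      rcases hcase with ⟨hj', hi'⟩ | ⟨hj', hi'⟩
      · rw [hi'] at hxi ⊢
        have hxC : x ∉ freeFm C := by
          simp [freeFm] at hxi
          exact hxi
        intro D M R Φ hΦ s
        simp only [satE]
        rintro ⟨m, hm⟩
        have hBC := IH j hji hj D M R Φ hΦ (Function.update s x m)
        rw [hj'] at hBC
        have hC : satE M R Φ (Function.update s x m) C := hBC hm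
        refine (satE_coin M R Φ C (s := Function.update s x m) (s' := s) ?_).mp hC
        intro y hy
        exact Function.update_of_ne (fun e => hxC (by rw [← e]; exact hy)) _ _
      · rw [hi'] at hxi ⊢
        have hxC : x ∉ freeFm C := by
          simp [freeFm] at hxi
          exact hxi
        intro D M R Φ hΦ s
        simp only [satE]
        intro hC m
        have hCB := IH j hji hj D M R Φ hΦ (Function.update s x m)
        rw [hj'] at hCB
        refine hCB ((satE_coin M R Φ C (s := s) (s' := Function.update s x m) ?_).mp hC)
        intro y hy
        exact (Function.update_of_ne (fun e => hxC (by rw [← e]; exact hy)) _ _).symm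

end FET
namespace FET

def tmM (v : Fm → Prop) : StrucOn Tm :=
  ⟨⟨.var 0⟩, fun f ts => .fn f ts, fun P ts => v (.pred P ts)⟩

def tmR (v : Fm → Prop) : Tm → Tm → Prop := fun a b => v (.eq a b)

open Classical in
noncomputable def tmPhi : Set Tm → Tm := fun X =>
  if h : X.Nonempty then h.choose else .var 0

theorem tmPhi_choice : IsChoice tmPhi := by
  intro X hX
  simp only [tmPhi]
  rw [dif_pos hX]
  exact hX.choose_spec

mutual
theorem valE_id (v : Fm → Prop) : ∀ t : Tm, epsFreeTm t →
    valE (tmM v) (tmR v) tmPhi (fun y => .var y) t = t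
  | .var x, _ => rfl
  | .fn f ts, h => by
      simp only [valE]
      exact congrArg _ (valLE_id v ts (by simpa [epsFreeTm] using h))
  | .eps x A, h => absurd h (by simp [epsFreeTm])
theorem valLE_id (v : Fm → Prop) : ∀ ts : List Tm, epsFreeL ts →
    valLE (tmM v) (tmR v) tmPhi (fun y => .var y) ts = ts
  | [], _ => rfl
  | t :: ts, h => by
      simp only [valLE]
      exact congrArg₂ _ (valE_id v t h.1) (valLE_id v ts h.2)
end

theorem bridge (v : Fm → Prop) : ∀ A : Fm, epsFreeFm A → qFreeFm A →
    (satE (tmM v) (tmR v) tmPhi (fun y => .var y) A ↔ evalP v A)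
  | .pred P ts, he, _ => by
      simp only [satE, evalP]
      rw [valLE_id v ts (by simpa [epsFreeFm] using he)]
      exact Iff.rfl
  | .eq t u, he, _ => by
      simp only [satE, evalP]
      rw [valE_id v t he.1, valE_id v u he.2]
      exact Iff.rfl
  | .bot, _, _ => by simp [satE, evalP]
  | .top, _, _ => by simp [satE, evalP]
  | .not A, he, hq => by
      simp only [satE, evalP]
      rw [bridge v A he hq]
  | .and A B, he, hq => by
      simp only [satE, evalP]
      rw [bridge v A he.1 hq.1, bridge v B he.2 hq.2]
  | .or A B, he, hq => by
      simp only [satE, evalP]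
      rw [bridge v A he.1 hq.1, bridge v B he.2 hq.2]
  | .imp A B, he, hq => by
      simp only [satE, evalP]
      rw [bridge v A he.1 hq.1, bridge v B he.2 hq.2]
  | .iff A B, he, hq => by
      simp only [satE, evalP]
      rw [bridge v A he.1 hq.1, bridge v B he.2 hq.2]
  | .all x A, _, hq => absurd hq (by simp [qFreeFm])
  | .ex x A, _, hq => absurd hq (by simp [qFreeFm])

theorem taut_of_valid {E : Fm} (he : epsFreeFm E) (hq : qFreeFm E) (hv : ValidE E) :
    Taut E := by
  intro v
  exact (bridge v E he hq).mp (hv Tm (tmM v) (tmR v) tmPhi tmPhi_choice (fun y => .var y))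

theorem provable_EC_of_taut {E : Fm} (h : Taut E) : Provable EC ∅ E := by
  refine ⟨[E], ?_, rfl⟩
  intro i hi
  have : i = 0 := by simpa using Nat.lt_one_iff.mp (by simpa using hi)
  subst this
  exact Or.inr (Or.inl (Or.inl h))

end FET

theorem FET.main {E : Fm} (h1 : epsFreeFm E) (h2 : qFreeFm E)
    (h : Provable ECeQNoEq ∅ E) : Provable EC ∅ E := by
  obtain ⟨L, hL, hlast⟩ := h
  have hne : L ≠ [] := by
    intro h'; subst h'; simp at hlast
  have hE : L.getLast hne = E := by
    have := List.getLast?_eq_getLast hne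
    rw [this] at hlast
    exact Option.some_injective _ hlast
  have hmem : E ∈ L := hE ▸ List.getLast_mem hne
  obtain ⟨n, hn⟩ := List.mem_iff_get.mp hmem
  have hv : FET.ValidE E := hn ▸ FET.proof_valid L hL n.1 n.2
  exact FET.provable_EC_of_taut (FET.taut_of_valid h1 h2 hv)

/-- First Epsilon Theorem (without identity): if E contains no
ε-terms and no quantifiers and is provable in the extended epsilon calculus
ECε∀, then E is provable in the elementary calculus EC. -/
theorem first_epsilon_theorem (E : Fm)
    (h1 : epsFreeFm E) (h2 : qFreeFm E)
    (h : Provable ECeQNoEq ∅ E) :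
    Provable EC ∅ E := by
  exact FET.main h1 h2 h
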